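/- Let S(t) = ∑_{j=1}^k a_j e^{2πi ω_j t} with distinct integer frequencies ω_j ∈ [−N/2, N/2) ∩ ℤ and nonzero complex coefficients a_j, where N > 1 is an integer. Let p > 1 be an integer, h ∈ {0,…,p−1}, and let ε be an irrational real number. If |I(S,h;p)| > 1, then there exists an integer m with 1 ≤ m ≤ q² − q, where q = |I(S,h;p)|, such that |Ŝ_{p,mε}[h]| ≠ |Ŝ_p[h]|. -/

import Mathlib

/-!
Sampling at the shifted points `n/p + mε` and keeping the DFT bin `h` isolates the aliased
frequencies: `Ŝ_{p,mε}[h] = p · g(mε)` with `g(t) = ∑_{j ∈ I} a_j e(ω_j t)`. Expanding,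
`|g(mε)|² = ∑_d c_d z_d^m`, where `d` runs over the at most `q² - q + 1` differences
`ω_i - ω_j` of aliased frequencies and `z_d = e(dε)`. Irrationality of `ε` makes the `z_d`
pairwise distinct, so if `|g(mε)|² = |g(0)|²` for `0 ≤ m ≤ q² - q`, the Vandermonde system forces
`c_d = 0` for every `d ≠ 0`. But for the largest difference `d = max ω - min ω` the coefficient
`c_d` is a single product `a_i conj(a_j) ≠ 0`.
-/

/-- The index set `I(S,h;p)` of frequencies congruent to `h` modulo `p`. -/
def aliasIdx {k : ℕ} (ω : Fin k → ℤ) (p h : ℕ) : Finset (Fin k) :=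
  Finset.univ.filter (fun j => ω j ≡ (h : ℤ) [ZMOD (p : ℤ)])

/-- The signal `S(t) = ∑ j, a j * exp(2πi ω_j t)`. -/
noncomputable def signal {k : ℕ} (a : Fin k → ℂ) (ω : Fin k → ℤ) (t : ℝ) : ℂ :=
  ∑ j, a j * Complex.exp (2 * (Real.pi : ℂ) * Complex.I * (ω j : ℂ) * (t : ℂ))

/-- The shifted sub-sampled DFT `Ŝ_{p,ε}[h]`. -/
noncomputable def sdft {k : ℕ} (a : Fin k → ℂ) (ω : Fin k → ℤ) (p : ℕ) (ε : ℝ) (h : ℕ) : ℂ :=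
  ∑ n ∈ Finset.range p,
    signal a ω ((n : ℝ) / (p : ℝ) + ε) *
      Complex.exp (-(2 * (Real.pi : ℂ) * Complex.I) * (n : ℂ) * (h : ℂ) / (p : ℂ))

open Complex Finset ComplexConjugate
open scoped Real

noncomputable def expTwoPiI (x : ℝ) : ℂ := exp (2 * π * I * x)

lemma expTwoPiI_add (x y : ℝ) : expTwoPiI (x + y) = expTwoPiI x * expTwoPiI y := by
  rw [expTwoPiI, expTwoPiI, expTwoPiI, ← exp_add]; congr 1; push_cast; ring

lemma expTwoPiI_zero : expTwoPiI 0 = 1 := by simp [expTwoPiI]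

lemma expTwoPiI_intCast (d : ℤ) : expTwoPiI d = 1 := by
  rw [expTwoPiI, ← exp_int_mul_two_pi_mul_I d]; congr 1; push_cast; ring

lemma expTwoPiI_natCast_mul (n : ℕ) (x : ℝ) : expTwoPiI (n * x) = expTwoPiI x ^ n := by
  rw [expTwoPiI, expTwoPiI, ← exp_nat_mul]; congr 1; push_cast; ring

lemma conj_expTwoPiI (x : ℝ) : conj (expTwoPiI x) = expTwoPiI (-x) := by
  rw [expTwoPiI, expTwoPiI, ← exp_conj]
  congr 1
  simp only [map_mul, conj_I, conj_ofReal, map_ofNat]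
  push_cast
  ring

lemma expTwoPiI_eq_one_iff {x : ℝ} : expTwoPiI x = 1 ↔ ∃ n : ℤ, x = n := by
  have h2πI : 2 * (π : ℂ) * I ≠ 0 := by simp [Real.pi_ne_zero]
  rw [expTwoPiI, exp_eq_one_iff]
  refine exists_congr fun n => ⟨fun hn => ?_, fun hn => by rw [hn]; push_cast; ring⟩
  exact_mod_cast mul_left_cancel₀ h2πI (hn.trans (mul_comm _ _))

lemma sum_range_expTwoPiI_mul_div {p : ℕ} (hp : p ≠ 0) (d : ℤ) :
    ∑ n ∈ range p, expTwoPiI (d * n / p) = if (p : ℤ) ∣ d then (p : ℂ) else 0 := by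
  have hp' : (p : ℝ) ≠ 0 := Nat.cast_ne_zero.mpr hp
  have hpow : ∀ n : ℕ, expTwoPiI (d * n / p) = expTwoPiI (d / p) ^ n := fun n => by
    rw [← expTwoPiI_natCast_mul]; ring_nf
  simp_rw [hpow]
  split_ifs with hdvd
  · obtain ⟨t, rfl⟩ := hdvd
    have : ((p * t : ℤ) : ℝ) / p = t := by push_cast; field_simp
    rw [this, expTwoPiI_intCast]
    simp
  · have hne : expTwoPiI (d / p) ≠ 1 := by
      rw [Ne, expTwoPiI_eq_one_iff]
      rintro ⟨n, hn⟩
      exact hdvd ⟨n, by rw [div_eq_iff hp'] at hn; exact_mod_cast hn.trans (mul_comm _ _)⟩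
    have hroot : expTwoPiI (d / p) ^ p = 1 := by
      rw [← expTwoPiI_natCast_mul, mul_div_cancel₀ _ hp', expTwoPiI_intCast]
    rw [geom_sum_eq hne, hroot, sub_self, zero_div]

lemma expTwoPiI_intCast_mul_injective {ε : ℝ} (hε : Irrational ε) :
    Function.Injective fun d : ℤ => expTwoPiI (d * ε) := by
  intro d₁ d₂ h
  by_contra hne
  have hone : expTwoPiI ((d₁ - d₂ : ℤ) * ε) = 1 := by
    simp only at h
    rw [Int.cast_sub, sub_mul, sub_eq_add_neg, expTwoPiI_add, h, ← expTwoPiI_add, add_neg_cancel,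
      expTwoPiI_zero]
  obtain ⟨n, hn⟩ := expTwoPiI_eq_one_iff.mp hone
  exact (hε.intCast_mul (sub_ne_zero.mpr hne)).ne_int n hn

theorem Finset.eq_zero_of_forall_sum_mul_pow_eq_zero {ι R : Type*} [CommRing R] [IsDomain R]
    {s : Finset ι} {z c : ι → R} (hz : Set.InjOn z s)
    (h : ∀ m < #s, ∑ i ∈ s, c i * z i ^ m = 0) : ∀ i ∈ s, c i = 0 := by
  let e := s.equivFin
  have hv : (fun j => c (e.symm j)) = 0 := by
    refine Matrix.eq_zero_of_forall_pow_sum_mul_pow_eq_zero (f := fun j => z (e.symm j)) ?_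
      fun m => ?_
    · exact fun j₁ j₂ hj => e.symm.injective (Subtype.ext (hz (e.symm j₁).2 (e.symm j₂).2 hj))
    · rw [← h m m.isLt, ← s.sum_coe_sort]
      exact e.symm.sum_comp fun i : s => c i * z i ^ (m : ℕ)
  intro i hi
  simpa using congrFun hv (e ⟨i, hi⟩)

section TrigSum

variable {ι : Type*} (I : Finset ι) (a : ι → ℂ) (ω : ι → ℤ)

noncomputable def trigSum (t : ℝ) : ℂ := ∑ j ∈ I, a j * expTwoPiI (ω j * t)

def diffSet : Finset ℤ := (I ×ˢ I).image fun x => ω x.1 - ω x.2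

noncomputable def pairCoeff (d : ℤ) : ℂ :=
  ∑ x ∈ I ×ˢ I with ω x.1 - ω x.2 = d, a x.1 * conj (a x.2)

lemma norm_trigSum_sq (t : ℝ) :
    (‖trigSum I a ω t‖ ^ 2 : ℂ) = ∑ d ∈ diffSet I ω, pairCoeff I a ω d * expTwoPiI (d * t) := by
  have hpair : (‖trigSum I a ω t‖ ^ 2 : ℂ) = ∑ x ∈ I ×ˢ I,
      a x.1 * conj (a x.2) * expTwoPiI ((ω x.1 - ω x.2 : ℤ) * t) := by
    rw [← mul_conj', trigSum, map_sum, sum_mul_sum, sum_product]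
    refine sum_congr rfl fun i _ => sum_congr rfl fun j _ => ?_
    rw [map_mul, conj_expTwoPiI, Int.cast_sub, sub_mul, sub_eq_add_neg, expTwoPiI_add]
    ring
  rw [hpair, ← sum_fiberwise_of_maps_to (t := diffSet I ω) fun x hx => mem_image_of_mem _ hx]
  refine sum_congr rfl fun d _ => ?_
  rw [pairCoeff, sum_mul]
  exact sum_congr rfl fun x hx => by rw [(mem_filter.mp hx).2]

lemma zero_mem_diffSet {I : Finset ι} (hI : I.Nonempty) : 0 ∈ diffSet I ω := by
  obtain ⟨j, hj⟩ := hI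
  exact mem_image.mpr ⟨(j, j), mem_product.mpr ⟨hj, hj⟩, sub_self _⟩

lemma card_diffSet_le : #(diffSet I ω) ≤ #I ^ 2 - #I + 1 := by
  have hsub : diffSet I ω ⊆ insert 0 (I.offDiag.image fun x => ω x.1 - ω x.2) := by
    intro d hd
    obtain ⟨⟨i, j⟩, hij, rfl⟩ := mem_image.mp hd
    obtain ⟨hi, hj⟩ := mem_product.mp hij
    by_cases hij : i = j
    · simp [hij]
    · exact mem_insert_of_mem (mem_image_of_mem _ (mem_offDiag.mpr ⟨hi, hj, hij⟩))
  calc #(diffSet I ω) ≤ #(I.offDiag.image fun x => ω x.1 - ω x.2) + 1 :=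
        (card_le_card hsub).trans (card_insert_le _ _)
    _ ≤ #I ^ 2 - #I + 1 := by
        rw [sq, ← offDiag_card]; exact Nat.add_le_add_right card_image_le 1

lemma pairCoeff_max_sub_min {I : Finset ι} (hω : Set.InjOn ω I) {iMax iMin : ι}
    (hMax : iMax ∈ I) (hMin : iMin ∈ I) (hmax : ∀ j ∈ I, ω j ≤ ω iMax)
    (hmin : ∀ j ∈ I, ω iMin ≤ ω j) :
    pairCoeff I a ω (ω iMax - ω iMin) = a iMax * conj (a iMin) := by
  rw [pairCoeff, sum_eq_single_of_mem (iMax, iMin) (by simp [hMax, hMin])]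
  rintro ⟨i, j⟩ hij hne
  obtain ⟨⟨hi, hj⟩, hd⟩ := by simpa only [mem_filter, mem_product] using hij
  have := hmax i hi
  have := hmin j hj
  exact absurd (Prod.ext (hω hi hMax (by omega)) (hω hj hMin (by omega))) hne

theorem exists_norm_trigSum_natCast_mul_ne {I : Finset ι} (hω : Set.InjOn ω I)
    (ha : ∀ j ∈ I, a j ≠ 0) {ε : ℝ} (hε : Irrational ε) (hI : 1 < #I) :
    ∃ m : ℕ, 1 ≤ m ∧ m ≤ #I ^ 2 - #I ∧ ‖trigSum I a ω (m * ε)‖ ≠ ‖trigSum I a ω 0‖ := by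
  by_contra! hconst
  have hI₀ : I.Nonempty := card_pos.mp (zero_lt_one.trans hI)
  have hD₀ := zero_mem_diffSet ω hI₀
  have hD := card_diffSet_le I ω
  set D := diffSet I ω
  set z : ℤ → ℂ := fun d => expTwoPiI (d * ε)
  set K : ℂ := ‖trigSum I a ω 0‖ ^ 2
  have hnormSq (m : ℕ) :
      (‖trigSum I a ω (m * ε)‖ ^ 2 : ℂ) = ∑ d ∈ D, pairCoeff I a ω d * z d ^ m := by
    rw [norm_trigSum_sq]
    refine sum_congr rfl fun d _ => ?_
    rw [← expTwoPiI_natCast_mul]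
    ring_nf
  -- `K = K * z 0 ^ m`: moving `K` into the coefficient of `d = 0` makes every moment vanish.
  have hmoments :
      ∀ m < #D, ∑ d ∈ D, (pairCoeff I a ω d - if d = 0 then K else 0) * z d ^ m = 0 := by
    intro m hm
    have hK : ∑ d ∈ D, (if d = 0 then K else 0) * z d ^ m = K := by
      simp [ite_mul, hD₀, z, expTwoPiI_zero]
    have hnorm : (‖trigSum I a ω (m * ε)‖ ^ 2 : ℂ) = K := by
      rcases Nat.eq_zero_or_pos m with rfl | hm₀
      · simp [K]
      · rw [hconst m hm₀ (by omega)]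
    simp_rw [sub_mul, sum_sub_distrib, hK, ← hnormSq, hnorm, sub_self]
  obtain ⟨iMax, hMax, hmax⟩ := exists_max_image I ω hI₀
  obtain ⟨iMin, hMin, hmin⟩ := exists_min_image I ω hI₀
  have hspread : ω iMax - ω iMin ≠ 0 := by
    obtain ⟨i, hi, j, hj, hij⟩ := one_lt_card.mp hI
    have := hmax i hi; have := hmin i hi; have := hmax j hj; have := hmin j hj
    exact fun h => hij (hω hi hj (by omega))
  have hcoeff := eq_zero_of_forall_sum_mul_pow_eq_zero
    ((expTwoPiI_intCast_mul_injective hε).injOn) hmoments (ω iMax - ω iMin)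
    (mem_image.mpr ⟨(iMax, iMin), mem_product.mpr ⟨hMax, hMin⟩, rfl⟩)
  rw [if_neg hspread, sub_zero, pairCoeff_max_sub_min a ω hω hMax hMin hmax hmin] at hcoeff
  exact mul_ne_zero (ha iMax hMax) ((map_ne_zero _).mpr (ha iMin hMin)) hcoeff

end TrigSum

lemma sdft_eq_mul_trigSum {k : ℕ} (a : Fin k → ℂ) (ω : Fin k → ℤ) {p : ℕ} (hp : p ≠ 0)
    (ε : ℝ) (h : ℕ) : sdft a ω p ε h = p * trigSum (aliasIdx ω p h) a ω ε := by
  have hsample : ∀ n : ℕ, signal a ω (n / p + ε) *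
      exp (-(2 * π * I) * n * h / p) =
      ∑ j, a j * expTwoPiI (ω j * ε) * expTwoPiI ((ω j - h : ℤ) * n / p) := by
    intro n
    rw [signal, sum_mul]
    refine sum_congr rfl fun j _ => ?_
    rw [expTwoPiI, expTwoPiI, mul_assoc (a j), ← exp_add, mul_assoc (a j), ← exp_add]
    congr 2
    push_cast
    ring
  simp_rw [sdft, hsample]
  rw [sum_comm, trigSum, aliasIdx, sum_filter, mul_sum]
  refine sum_congr rfl fun j _ => ?_
  have hdvd : (p : ℤ) ∣ ω j - h ↔ ω j ≡ h [ZMOD p] :=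
    (Int.modEq_comm.trans Int.modEq_iff_dvd).symm
  rw [← mul_sum, sum_range_expTwoPiI_mul_div hp]
  simp only [hdvd]
  split_ifs <;> ring

theorem stmt18_general {k : ℕ} (a : Fin k → ℂ) (ω : Fin k → ℤ) (hω : Function.Injective ω)
    (ha : ∀ j, a j ≠ 0)
    (p : ℕ) (hp : 1 < p) (h : ℕ)
    (ε : ℝ) (hε : Irrational ε) (hq : 1 < (aliasIdx ω p h).card) :
    ∃ m : ℕ, 1 ≤ m ∧ m ≤ (aliasIdx ω p h).card ^ 2 - (aliasIdx ω p h).card ∧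
      ‖sdft a ω p ((m : ℝ) * ε) h‖ ≠ ‖sdft a ω p 0 h‖ := by
  obtain ⟨m, hm₁, hm, hne⟩ :=
    exists_norm_trigSum_natCast_mul_ne a ω hω.injOn (fun j _ => ha j) hε hq
  refine ⟨m, hm₁, hm, ?_⟩
  have hp₀ : p ≠ 0 := by omega
  rwa [sdft_eq_mul_trigSum a ω hp₀, sdft_eq_mul_trigSum a ω hp₀, norm_mul, norm_mul,
    Ne, mul_right_inj' (by simpa using hp₀)]

theorem stmt18 {k : ℕ} (a : Fin k → ℂ) (ω : Fin k → ℤ) (hω : Function.Injective ω)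
    (ha : ∀ j, a j ≠ 0) (N : ℕ) (hN : 1 < N)
    (hrange : ∀ j, -(N : ℤ) ≤ 2 * ω j ∧ 2 * ω j < (N : ℤ))
    (p : ℕ) (hp : 1 < p) (h : ℕ) (hh : h < p)
    (ε : ℝ) (hε : Irrational ε) (hq : 1 < (aliasIdx ω p h).card) :
    ∃ m : ℕ, 1 ≤ m ∧ m ≤ (aliasIdx ω p h).card ^ 2 - (aliasIdx ω p h).card ∧
      ‖sdft a ω p ((m : ℝ) * ε) h‖ ≠ ‖sdft a ω p 0 h‖ :=
  stmt18_general a ω hω ha p hp h ε hε hq
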